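/- arXiv:2505.23545 — 2 statements merged into one kernel-verified Lean document; each statement's English description precedes it below -/
import Mathlib

section
/- For every ε > 0 there exists δ > 0 such that for every h with 0 < h < δ and every u solving BVP(h), one has |u(y) − c_*| + |u'(y)| + |u''(y)| < ε for all y ∈ [0,1]; i.e., u[h] → c_* in C²([0,1]) as h → 0. -/
open Set MeasureTheory intervalIntegral Filter
open Topology

/-- `u` (with derivative `u'` and second derivative `u''`) solves the boundary value
problem BVP(h): `(κ/h²)·u'' = r(u)` on `[0,1]`, `u'(0) = 0`,
`u(1) + (L·κ/(κ_L·h))·u'(1) = c_*`. -/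
def SolvesBVP (κ κL L cstar : ℝ) (r : ℝ → ℝ) (h : ℝ)
    (u u' u'' : ℝ → ℝ) : Prop :=
  (∀ y ∈ Icc (0:ℝ) 1, HasDerivWithinAt u (u' y) (Icc (0:ℝ) 1) y) ∧
  (∀ y ∈ Icc (0:ℝ) 1, HasDerivWithinAt u' (u'' y) (Icc (0:ℝ) 1) y) ∧
  ContinuousOn u'' (Icc (0:ℝ) 1) ∧
  (∀ y ∈ Icc (0:ℝ) 1, (κ / h ^ 2) * u'' y = r (u y)) ∧
  u' 0 = 0 ∧
  u 1 + (L * κ / (κL * h)) * u' 1 = cstar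

/-!
Since `s·r(s) ≥ 0`, a solution satisfies `(u u')' = u'² + u u'' ≥ 0`; with `u'(0) = 0` this
gives `u u' ≥ 0`, so `u²` increases, and multiplying the Robin condition by `u(1)` yields
`|u| ≤ |c_*|` on `[0,1]`. Hence `|u''| = (h²/κ)|r(u)| = O(h²)`, integrating gives
`u' = O(h²)` and `u - u(1) = O(h²)`, and the Robin condition turns `u'(1) = O(h²)` into
`u(1) - c_* = O(h)`.
-/

lemma monotoneOn_Icc_of_hasDerivWithinAt_nonneg {f f' : ℝ → ℝ} {a b : ℝ}
    (hf : ∀ x ∈ Icc a b, HasDerivWithinAt f (f' x) (Icc a b) x)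
    (hf' : ∀ x ∈ Ioo a b, 0 ≤ f' x) : MonotoneOn f (Icc a b) :=
  monotoneOn_of_hasDerivWithinAt_nonneg (convex_Icc a b)
    (fun x hx => (hf x hx).continuousWithinAt)
    (fun x hx => by
      rw [interior_Icc] at hx ⊢
      exact (hf x (Ioo_subset_Icc_self hx)).mono Ioo_subset_Icc_self)
    (fun x hx => hf' x (by rwa [interior_Icc] at hx))

section Convexity

variable {u u' u'' : ℝ → ℝ} {a b : ℝ}
  (hu : ∀ y ∈ Icc a b, HasDerivWithinAt u (u' y) (Icc a b) y)
  (hu' : ∀ y ∈ Icc a b, HasDerivWithinAt u' (u'' y) (Icc a b) y)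

include hu hu' in
lemma mul_deriv_nonneg_of_mul_second_deriv_nonneg
    (hconv : ∀ y ∈ Icc a b, 0 ≤ u y * u'' y) (ha : u' a = 0) :
    ∀ y ∈ Icc a b, 0 ≤ u y * u' y := by
  intro y hy
  have hmono : MonotoneOn (fun z => u z * u' z) (Icc a b) :=
    monotoneOn_Icc_of_hasDerivWithinAt_nonneg (fun z hz => (hu z hz).mul (hu' z hz))
      (fun z hz => add_nonneg (mul_self_nonneg _) (hconv z (Ioo_subset_Icc_self hz)))
  simpa [ha] using hmono (left_mem_Icc.2 (hy.1.trans hy.2)) hy hy.1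

include hu in
lemma sq_le_sq_right_of_mul_deriv_nonneg (hmul : ∀ y ∈ Icc a b, 0 ≤ u y * u' y) :
    ∀ y ∈ Icc a b, u y ^ 2 ≤ u b ^ 2 := by
  intro y hy
  have hmono : MonotoneOn (fun z => u z ^ 2) (Icc a b) :=
    monotoneOn_Icc_of_hasDerivWithinAt_nonneg (fun z hz => (hu z hz).fun_pow 2)
      (fun z hz => by norm_num [mul_assoc]; exact hmul z (Ioo_subset_Icc_self hz))
  exact hmono hy (right_mem_Icc.2 (hy.1.trans hy.2)) hy.2

end Convexity

lemma abs_le_abs_of_add_mul_eq {x x' k c : ℝ} (hk : 0 ≤ k) (hxx' : 0 ≤ x * x')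
    (h : x + k * x' = c) : |x| ≤ |c| :=
  have hxc : x ^ 2 ≤ x * c := by rw [← h]; nlinarith [mul_nonneg hk hxx']
  sq_le_sq.1 (by nlinarith [sq_nonneg (x - c)])

lemma abs_sub_le_of_abs_deriv_le {f f' : ℝ → ℝ} {C : ℝ}
    (hf : ∀ y ∈ Icc (0:ℝ) 1, HasDerivWithinAt f (f' y) (Icc (0:ℝ) 1) y)
    (hC : ∀ y ∈ Icc (0:ℝ) 1, |f' y| ≤ C) {x y : ℝ} (hx : x ∈ Icc (0:ℝ) 1)
    (hy : y ∈ Icc (0:ℝ) 1) : |f y - f x| ≤ C := by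
  have hC0 : 0 ≤ C := (abs_nonneg _).trans (hC x hx)
  have hxy : |y - x| ≤ 1 := abs_le.2 ⟨by linarith [hx.2, hy.1], by linarith [hx.1, hy.2]⟩
  calc |f y - f x| ≤ C * |y - x| :=
        Convex.norm_image_sub_le_of_norm_hasDerivWithin_le hf hC (convex_Icc 0 1) hx hy
    _ ≤ C := mul_le_of_le_one_right hC0 hxy

namespace SolvesBVP

variable {κ κL L cstar : ℝ} {r : ℝ → ℝ} {h : ℝ} {u u' u'' : ℝ → ℝ}

lemma second_deriv_eq (hκ : 0 < κ) (hh : 0 < h)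
    (hsol : SolvesBVP κ κL L cstar r h u u' u'') :
    ∀ y ∈ Icc (0:ℝ) 1, u'' y = h ^ 2 / κ * r (u y) := by
  intro y hy
  rw [← hsol.2.2.2.1 y hy]
  field_simp

lemma abs_le_abs_cstar (hκ : 0 < κ) (hκL : 0 < κL) (hL : 0 < L) (hh : 0 < h)
    (hr : ∀ s, 0 ≤ s * r s) (hsol : SolvesBVP κ κL L cstar r h u u' u'') :
    ∀ y ∈ Icc (0:ℝ) 1, |u y| ≤ |cstar| := by
  have hconv : ∀ y ∈ Icc (0:ℝ) 1, 0 ≤ u y * u'' y := fun y hy => by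
    rw [hsol.second_deriv_eq hκ hh y hy, mul_left_comm]
    exact mul_nonneg (by positivity) (hr _)
  obtain ⟨hu, hu', -, -, h0, h1⟩ := hsol
  have hmul := mul_deriv_nonneg_of_mul_second_deriv_nonneg hu hu' hconv h0
  have hright : |u 1| ≤ |cstar| :=
    abs_le_abs_of_add_mul_eq (by positivity) (hmul 1 (right_mem_Icc.2 zero_le_one)) h1
  exact fun y hy => (sq_le_sq.1 (sq_le_sq_right_of_mul_deriv_nonneg hu hmul y hy)).trans hright

lemma estimate (hκ : 0 < κ) (hκL : 0 < κL) (hL : 0 < L) (hh : 0 < h)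
    (hr : ∀ s, 0 ≤ s * r s) {M : ℝ} (hM : ∀ s ∈ Icc (-|cstar|) |cstar|, |r s| ≤ M)
    (hsol : SolvesBVP κ κL L cstar r h u u' u'') :
    ∀ y ∈ Icc (0:ℝ) 1,
      |u y - cstar| + |u' y| + |u'' y| ≤ (L / κL * h + 3 * (h ^ 2 / κ)) * M := by
  intro y hy
  have hu''_le : ∀ z ∈ Icc (0:ℝ) 1, |u'' z| ≤ h ^ 2 / κ * M := fun z hz => by
    have hrz := hM _ (abs_le.1 (hsol.abs_le_abs_cstar hκ hκL hL hh hr z hz))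
    rw [hsol.second_deriv_eq hκ hh z hz, abs_mul, abs_of_pos (by positivity)]
    exact mul_le_mul_of_nonneg_left hrz (by positivity)
  obtain ⟨hu, hu', -, -, hneumann, hrobin⟩ := hsol
  have hu'_le : ∀ z ∈ Icc (0:ℝ) 1, |u' z| ≤ h ^ 2 / κ * M := fun z hz => by
    simpa [hneumann] using abs_sub_le_of_abs_deriv_le hu' hu''_le (left_mem_Icc.2 zero_le_one) hz
  have hu_one : |u 1 - cstar| ≤ L / κL * h * M := by
    have : u 1 - cstar = -(L * κ / (κL * h) * u' 1) := by linarith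
    rw [this, abs_neg, abs_mul, abs_of_pos (by positivity)]
    calc L * κ / (κL * h) * |u' 1| ≤ L * κ / (κL * h) * (h ^ 2 / κ * M) :=
          mul_le_mul_of_nonneg_left (hu'_le 1 (right_mem_Icc.2 zero_le_one)) (by positivity)
      _ = L / κL * h * M := by field_simp
  have hu_sub : |u y - u 1| ≤ h ^ 2 / κ * M :=
    abs_sub_le_of_abs_deriv_le hu hu'_le (right_mem_Icc.2 zero_le_one) hy
  linarith [abs_sub_le (u y) (u 1) cstar, hu'_le y hy, hu''_le y hy]

end SolvesBVP

theorem BVP_limit_h_to_zero_general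
    (κ κL L cstar : ℝ) (hκ : 0 < κ) (hκL : 0 < κL) (hL : 0 < L)
    (r : ℝ → ℝ) (hr : ContDiff ℝ 1 r) (hrsign : ∀ s : ℝ, s ≠ 0 → s * r s > 0) :
    ∀ ε > (0:ℝ), ∃ δ > (0:ℝ), ∀ h : ℝ, 0 < h → h < δ →
      ∀ u u' u'' : ℝ → ℝ, SolvesBVP κ κL L cstar r h u u' u'' →
        ∀ y ∈ Icc (0:ℝ) 1, |u y - cstar| + |u' y| + |u'' y| < ε := by
  intro ε hε
  have hr_nonneg : ∀ s, 0 ≤ s * r s := fun s => by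
    rcases eq_or_ne s 0 with rfl | hs
    · simp
    · exact (hrsign s hs).le
  obtain ⟨M, hM⟩ := isCompact_Icc.exists_bound_of_continuousOn
    (hr.continuous.continuousOn (s := Icc (-|cstar|) |cstar|))
  have hbound_tendsto :
      Tendsto (fun h => (L / κL * h + 3 * (h ^ 2 / κ)) * M) (𝓝 0) (𝓝 0) := by
    have hcont : Continuous fun h : ℝ => (L / κL * h + 3 * (h ^ 2 / κ)) * M := by fun_prop
    simpa using hcont.tendsto 0
  obtain ⟨δ, hδ, hsmall⟩ := Metric.tendsto_nhds_nhds.1 hbound_tendsto ε hε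
  refine ⟨δ, hδ, fun h hh hhδ u u' u'' hsol y hy => ?_⟩
  have hclose := hsmall (by rwa [Real.dist_eq, sub_zero, abs_of_pos hh])
  rw [Real.dist_eq, sub_zero] at hclose
  exact (hsol.estimate hκ hκL hL hh hr_nonneg hM y hy).trans_lt
    (lt_of_abs_lt hclose)

theorem BVP_limit_h_to_zero
    (κ κL L cstar : ℝ) (hκ : 0 < κ) (hκL : 0 < κL) (hL : 0 < L) (hc : 0 < cstar)
    (r : ℝ → ℝ) (hr : ContDiff ℝ 1 r) (hrsign : ∀ s : ℝ, s ≠ 0 → s * r s > 0)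
    (hr' : ∀ s : ℝ, 0 ≤ deriv r s) :
    ∀ ε > (0:ℝ), ∃ δ > (0:ℝ), ∀ h : ℝ, 0 < h → h < δ →
      ∀ u u' u'' : ℝ → ℝ, SolvesBVP κ κL L cstar r h u u' u'' →
        ∀ y ∈ Icc (0:ℝ) 1, |u y - cstar| + |u' y| + |u'' y| < ε :=
  BVP_limit_h_to_zero_general κ κL L cstar hκ hκL hL r hr hrsign
end

section
/- Assume in addition that r'(s) > 0 for all s ∈ [0, c_*]. Then for every δ ∈ (0,1) and every ε > 0 there exists H > 0 such that for every h ≥ H and every u solving BVP(h), one has 0 ≤ u(y) ≤ ε for all y ∈ [0, 1−δ]; i.e., u[h] → 0 uniformly on every compact subinterval of [0,1) as h → ∞. -/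
/-!
A one-dimensional maximum principle (a function whose second derivative is positive wherever the
function is positive, whose slope is nonnegative at the left end, and whose slope is negative at
the right end if the function is positive there, is nonpositive) gives first `0 ≤ u ≤ c_*`.
Since `r s ≥ m s` on `[0, c_*]` with `m = min r' > 0`, the same principle then compares `u`
with the barrier `c_* cosh (ω y) / cosh ω`, `ω = h √(m / κ)`, which is at most `2 c_* e^{-ω δ}`
on `[0, 1 - δ]`.
-/

open Set MeasureTheory intervalIntegral Filter

open Real Topology

section MaximumPrinciple

variable {f f' f'' : ℝ → ℝ} {a b : ℝ}

lemma strictMonoOn_Icc_of_hasDerivWithinAt_pos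
    (hf : ∀ y ∈ Icc a b, HasDerivWithinAt f (f' y) (Icc a b) y) {c d : ℝ}
    (hcd : Icc c d ⊆ Icc a b) (hpos : ∀ y ∈ Ioo c d, 0 < f' y) :
    StrictMonoOn f (Icc c d) := by
  refine strictMonoOn_of_hasDerivWithinAt_pos (f' := f') (convex_Icc c d)
    (fun y hy => ((hf y (hcd hy)).continuousWithinAt).mono hcd) ?_ ?_ <;> rw [interior_Icc]
  · exact fun y hy => (hf y (hcd (Ioo_subset_Icc_self hy))).mono (Ioo_subset_Icc_self.trans hcd)
  · exact hpos

lemma not_isMaxOn_of_deriv_nonneg_of_secondDeriv_pos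
    (hf : ∀ y ∈ Icc a b, HasDerivWithinAt f (f' y) (Icc a b) y)
    (hf' : ∀ y ∈ Icc a b, HasDerivWithinAt f' (f'' y) (Icc a b) y)
    {y₀ : ℝ} (hy₀ : y₀ ∈ Ico a b) (hd : 0 ≤ f' y₀) (hpos : ∀ᶠ y in 𝓝[>] y₀, 0 < f'' y) :
    ¬ IsMaxOn f (Icc a b) y₀ := by
  obtain ⟨c, hy₀c, hc⟩ := mem_nhdsGT_iff_exists_Ioo_subset.1 hpos
  set d := min c b
  have hy₀d : y₀ < d := lt_min hy₀c hy₀.2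
  have hsub : Icc y₀ d ⊆ Icc a b := Icc_subset_Icc hy₀.1 (min_le_right c b)
  have hf'_pos : ∀ y ∈ Ioo y₀ d, 0 < f' y := fun y hy =>
    hd.trans_lt <| strictMonoOn_Icc_of_hasDerivWithinAt_pos hf' hsub
      (fun z hz => hc ⟨hz.1, hz.2.trans_le (min_le_left c b)⟩)
      (left_mem_Icc.2 hy₀d.le) (Ioo_subset_Icc_self hy) hy.1
  intro hmax
  exact (strictMonoOn_Icc_of_hasDerivWithinAt_pos hf hsub hf'_pos (left_mem_Icc.2 hy₀d.le)
    (right_mem_Icc.2 hy₀d.le) hy₀d).not_ge (hmax (hsub (right_mem_Icc.2 hy₀d.le)))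

lemma IsMaxOn.hasDerivWithinAt_Icc_right_nonneg {f'b : ℝ} (hab : a < b)
    (hmax : IsMaxOn f (Icc a b) b) (hf : HasDerivWithinAt f f'b (Icc a b) b) : 0 ≤ f'b := by
  have hcone : a - b ∈ posTangentConeAt (Icc a b) b :=
    sub_mem_posTangentConeAt_of_segment_subset
      ((convex_Icc a b).segment_subset (right_mem_Icc.2 hab.le) (left_mem_Icc.2 hab.le))
  have := hmax.localize.hasFDerivWithinAt_nonpos hf.hasFDerivWithinAt hcone
  simp only [ContinuousLinearMap.toSpanSingleton_apply, smul_eq_mul] at this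
  nlinarith

theorem nonpos_of_pos_imp_secondDeriv_pos (hab : a < b)
    (hf : ∀ y ∈ Icc a b, HasDerivWithinAt f (f' y) (Icc a b) y)
    (hf' : ∀ y ∈ Icc a b, HasDerivWithinAt f' (f'' y) (Icc a b) y)
    (hconvex : ∀ y ∈ Icc a b, 0 < f y → 0 < f'' y)
    (ha : 0 ≤ f' a) (hb : 0 < f b → f' b < 0) :
    ∀ y ∈ Icc a b, f y ≤ 0 := by
  have hcont : ContinuousOn f (Icc a b) := fun y hy => (hf y hy).continuousWithinAt
  obtain ⟨y₁, hy₁, hmax⟩ := isCompact_Icc.exists_isMaxOn (nonempty_Icc.2 hab.le) hcont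
  by_contra! hpos
  obtain ⟨y, hy, hfy⟩ := hpos
  have hfy₁ : 0 < f y₁ := hfy.trans_le (hmax hy)
  rcases hy₁.2.lt_or_eq with hy₁b | rfl
  · have hd : 0 ≤ f' y₁ := by
      rcases hy₁.1.eq_or_lt with rfl | hay₁
      · exact ha
      · exact ((hmax.isLocalMax (Icc_mem_nhds hay₁ hy₁b)).hasDerivAt_eq_zero
          ((hf y₁ hy₁).hasDerivAt (Icc_mem_nhds hay₁ hy₁b))).ge
    have hIcc : Icc a b ∈ 𝓝[>] y₁ :=
      ordConnected_Icc.mem_nhdsGT hy₁ (right_mem_Icc.2 hab.le) hy₁b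
    have hf''_pos : ∀ᶠ y in 𝓝[>] y₁, 0 < f'' y := by
      have hfpos : ∀ᶠ y in 𝓝[Icc a b] y₁, 0 < f y := (hcont y₁ hy₁).eventually (lt_mem_nhds hfy₁)
      filter_upwards [nhdsWithin_le_of_mem hIcc hfpos, hIcc] with y hfy hy using hconvex y hy hfy
    exact not_isMaxOn_of_deriv_nonneg_of_secondDeriv_pos hf hf' ⟨hy₁.1, hy₁b⟩ hd hf''_pos hmax
  · exact (hb hfy₁).not_ge (hmax.hasDerivWithinAt_Icc_right_nonneg hab (hf y₁ hy₁))

end MaximumPrinciple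

lemma Continuous.apply_zero_eq_zero_of_mul_pos {r : ℝ → ℝ} (hr : Continuous r)
    (hsign : ∀ s : ℝ, s ≠ 0 → s * r s > 0) : r 0 = 0 := by
  have hright : 0 ≤ r 0 :=
    ge_of_tendsto (hr.tendsto 0 |>.mono_left (nhdsWithin_le_nhds (s := Ioi 0))) <|
      eventually_nhdsWithin_of_forall fun s (hs : 0 < s) =>
        ((pos_iff_pos_of_mul_pos (hsign s hs.ne')).1 hs).le
  have hleft : r 0 ≤ 0 :=
    le_of_tendsto (hr.tendsto 0 |>.mono_left (nhdsWithin_le_nhds (s := Iio 0))) <|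
      eventually_nhdsWithin_of_forall fun s (hs : s < 0) =>
        ((neg_iff_neg_of_mul_pos (hsign s hs.ne)).1 hs).le
  exact le_antisymm hleft hright

lemma exists_pos_mul_le_of_deriv_pos {r : ℝ → ℝ} (hr : ContDiff ℝ 1 r) (hr0 : r 0 = 0)
    {c : ℝ} (hc : 0 ≤ c) (hpos : ∀ s ∈ Icc 0 c, 0 < deriv r s) :
    ∃ m > 0, ∀ s ∈ Icc 0 c, m * s ≤ r s := by
  obtain ⟨s₀, hs₀, hmin⟩ := isCompact_Icc.exists_isMinOn (nonempty_Icc.2 hc)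
    (hr.continuous_deriv le_rfl).continuousOn
  refine ⟨deriv r s₀, hpos s₀ hs₀, fun s hs => ?_⟩
  simpa [hr0] using (convex_Icc 0 c).mul_sub_le_image_sub_of_le_deriv
    hr.continuous.continuousOn (hr.differentiable one_ne_zero).differentiableOn
    (fun x hx => hmin (interior_subset hx)) 0 (left_mem_Icc.2 hc) s hs hs.1

lemma cosh_mul_div_cosh_le_two_mul_exp {ω y δ : ℝ} (hω : 0 ≤ ω) (hy : 0 ≤ y)
    (hyδ : y ≤ 1 - δ) : cosh (ω * y) / cosh ω ≤ 2 * exp (-(ω * δ)) := by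
  have hcosh_le : cosh (ω * y) ≤ exp (ω * y) := by
    rw [cosh_eq]
    linarith [exp_le_exp.2 (by nlinarith : -(ω * y) ≤ ω * y)]
  have hcosh_ge : exp ω / 2 ≤ cosh ω := by
    rw [cosh_eq]
    linarith [exp_pos (-ω)]
  calc cosh (ω * y) / cosh ω ≤ exp (ω * y) / (exp ω / 2) := by
        gcongr
    _ = 2 * exp (ω * y - ω) := by rw [exp_sub]; ring
    _ ≤ 2 * exp (-(ω * δ)) := by gcongr; nlinarith

namespace SolvesBVP

variable {κ κL L cstar h : ℝ} {r u u' u'' : ℝ → ℝ}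

lemma secondDeriv_eq (hsol : SolvesBVP κ κL L cstar r h u u' u'') (hκ : κ ≠ 0) (hh : h ≠ 0)
    {y : ℝ} (hy : y ∈ Icc (0:ℝ) 1) : u'' y = h ^ 2 / κ * r (u y) := by
  rw [← hsol.2.2.2.1 y hy]
  field_simp

lemma deriv_one_eq (hsol : SolvesBVP κ κL L cstar r h u u' u'') (hκ : κ ≠ 0) (hκL : κL ≠ 0)
    (hL : L ≠ 0) (hh : h ≠ 0) : u' 1 = κL * h / (L * κ) * (cstar - u 1) := by
  rw [← hsol.2.2.2.2.2]
  field_simp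
  ring

lemma nonneg (hsol : SolvesBVP κ κL L cstar r h u u' u'') (hκ : 0 < κ) (hκL : 0 < κL)
    (hL : 0 < L) (hc : 0 ≤ cstar) (hh : 0 < h) (hrsign : ∀ s : ℝ, s ≠ 0 → s * r s > 0) :
    ∀ y ∈ Icc (0:ℝ) 1, 0 ≤ u y := by
  have ⟨hu, hu', _, _, hu'0, _⟩ := hsol
  have hneg := nonpos_of_pos_imp_secondDeriv_pos zero_lt_one
    (f := fun y => -u y) (f' := fun y => -u' y) (f'' := fun y => -u'' y)
    (fun y hy => (hu y hy).neg) (fun y hy => (hu' y hy).neg) ?_ (by simp [hu'0]) ?_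
  · exact fun y hy => neg_nonpos.1 (hneg y hy)
  · intro y hy huy
    have hr : r (u y) < 0 := (neg_iff_neg_of_mul_pos (hrsign _ (by linarith))).1 (by linarith)
    rw [hsol.secondDeriv_eq hκ.ne' hh.ne' hy, neg_pos]
    exact mul_neg_of_pos_of_neg (by positivity) hr
  · intro hu1
    rw [hsol.deriv_one_eq hκ.ne' hκL.ne' hL.ne' hh.ne', neg_neg_iff_pos]
    exact mul_pos (by positivity) (by linarith)

lemma le_cstar (hsol : SolvesBVP κ κL L cstar r h u u' u'') (hκ : 0 < κ) (hκL : 0 < κL)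
    (hL : 0 < L) (hc : 0 ≤ cstar) (hh : 0 < h) (hrsign : ∀ s : ℝ, s ≠ 0 → s * r s > 0) :
    ∀ y ∈ Icc (0:ℝ) 1, u y ≤ cstar := by
  have ⟨hu, hu', _, _, hu'0, _⟩ := hsol
  have hle := nonpos_of_pos_imp_secondDeriv_pos zero_lt_one
    (f := fun y => u y - cstar) (fun y hy => (hu y hy).sub_const cstar) hu' ?_ hu'0.ge ?_
  · exact fun y hy => sub_nonpos.1 (hle y hy)
  · intro y hy huy
    have hr : 0 < r (u y) := (pos_iff_pos_of_mul_pos (hrsign _ (by linarith))).1 (by linarith)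
    rw [hsol.secondDeriv_eq hκ.ne' hh.ne' hy]
    positivity
  · intro hu1
    rw [hsol.deriv_one_eq hκ.ne' hκL.ne' hL.ne' hh.ne']
    exact mul_neg_of_pos_of_neg (by positivity) (by linarith)

lemma le_mul_cosh_div_cosh (hsol : SolvesBVP κ κL L cstar r h u u' u'') (hκ : 0 < κ)
    (hκL : 0 < κL) (hL : 0 < L) (hc : 0 ≤ cstar) (hh : 0 < h)
    (hrsign : ∀ s : ℝ, s ≠ 0 → s * r s > 0) {m ω : ℝ} (hrm : ∀ s ∈ Icc 0 cstar, m * s ≤ r s)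
    (hω : 0 < ω) (hωm : κ * ω ^ 2 ≤ h ^ 2 * m) :
    ∀ y ∈ Icc (0:ℝ) 1, u y ≤ cstar * cosh (ω * y) / cosh ω := by
  have ⟨hu, hu', _, _, hu'0, _⟩ := hsol
  have hcosh (y : ℝ) : HasDerivAt (fun t => cosh (ω * t)) (sinh (ω * y) * ω) y := by
    simpa using ((hasDerivAt_id y).const_mul ω).cosh
  have hsinh (y : ℝ) : HasDerivAt (fun t => sinh (ω * t)) (cosh (ω * y) * ω) y := by
    simpa using ((hasDerivAt_id y).const_mul ω).sinh
  set A := cstar / cosh ω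
  have hle := nonpos_of_pos_imp_secondDeriv_pos zero_lt_one
    (f := fun y => u y - A * cosh (ω * y))
    (f' := fun y => u' y - A * (sinh (ω * y) * ω))
    (f'' := fun y => u'' y - A * (cosh (ω * y) * ω * ω))
    (fun y hy => (hu y hy).sub ((hcosh y).const_mul A).hasDerivWithinAt)
    (fun y hy => (hu' y hy).sub (((hsinh y).mul_const ω).const_mul A).hasDerivWithinAt)
    ?_ (by simp [hu'0]) ?_
  · intro y hy
    rw [mul_div_right_comm]
    exact sub_nonpos.1 (hle y hy)
  · intro y hy hw
    have hu0 := hsol.nonneg hκ hκL hL hc hh hrsign y hy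
    have hr := hrm (u y) ⟨hu0, hsol.le_cstar hκ hκL hL hc hh hrsign y hy⟩
    have hu'' : ω ^ 2 * u y ≤ u'' y := calc
      ω ^ 2 * u y ≤ h ^ 2 / κ * m * u y := by
        gcongr
        rw [div_mul_eq_mul_div, le_div_iff₀ hκ]
        linarith
      _ ≤ u'' y := by
        rw [hsol.secondDeriv_eq hκ.ne' hh.ne' hy, mul_assoc]
        gcongr
    nlinarith [mul_pos (pow_pos hω 2) hw]
  · intro hw
    have hA : A * cosh (ω * 1) = cstar := by
      rw [mul_one]; exact div_mul_cancel₀ _ (cosh_pos ω).ne'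
    simp only [hA] at hw
    linarith [hsol.le_cstar hκ hκL hL hc hh hrsign 1 (right_mem_Icc.2 zero_le_one)]

end SolvesBVP

theorem BVP_limit_h_to_infinity_general
    (κ κL L cstar : ℝ) (hκ : 0 < κ) (hκL : 0 < κL) (hL : 0 < L) (hc : 0 < cstar)
    (r : ℝ → ℝ) (hr : ContDiff ℝ 1 r) (hrsign : ∀ s : ℝ, s ≠ 0 → s * r s > 0)
    (hr'pos : ∀ s ∈ Icc (0:ℝ) cstar, 0 < deriv r s) :
    ∀ δ : ℝ, δ ∈ Ioo (0:ℝ) 1 → ∀ ε > (0:ℝ), ∃ H > (0:ℝ), ∀ h : ℝ, H ≤ h →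
      ∀ u u' u'' : ℝ → ℝ, SolvesBVP κ κL L cstar r h u u' u'' →
        ∀ y ∈ Icc (0:ℝ) (1 - δ), 0 ≤ u y ∧ u y ≤ ε := by
  intro δ hδ ε hε
  obtain ⟨m, hm, hrm⟩ := exists_pos_mul_le_of_deriv_pos hr
    (hr.continuous.apply_zero_eq_zero_of_mul_pos hrsign) hc.le hr'pos
  set α := √(m / κ)
  have hα : 0 < α := sqrt_pos.2 (div_pos hm hκ)
  have hdecay : ∀ᶠ h in atTop, 2 * cstar * exp (-(h * α * δ)) < ε := by
    have := (tendsto_exp_neg_atTop_nhds_zero.comp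
      (tendsto_id.atTop_mul_const (mul_pos hα hδ.1))).const_mul (2 * cstar)
    simp only [mul_zero] at this
    filter_upwards [this.eventually (gt_mem_nhds hε)] with h hh
    simpa [mul_assoc] using hh
  obtain ⟨H, hH⟩ := eventually_atTop.1 hdecay
  refine ⟨max H 1, by positivity, fun h hh u u' u'' hsol y hy => ?_⟩
  have hh₀ : 0 < h := zero_lt_one.trans_le (le_of_max_le_right hh)
  have hy₁ : y ∈ Icc (0:ℝ) 1 := ⟨hy.1, hy.2.trans (by linarith [hδ.1])⟩
  have hκα : κ * (h * α) ^ 2 = h ^ 2 * m := by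
    rw [mul_pow, sq_sqrt (div_pos hm hκ).le]
    field_simp
  refine ⟨hsol.nonneg hκ hκL hL hc.le hh₀ hrsign y hy₁, ?_⟩
  calc u y ≤ cstar * cosh (h * α * y) / cosh (h * α) :=
        hsol.le_mul_cosh_div_cosh hκ hκL hL hc.le hh₀ hrsign hrm (by positivity) hκα.le y hy₁
    _ ≤ cstar * (2 * exp (-(h * α * δ))) := by
        rw [mul_div_assoc]
        gcongr
        exact cosh_mul_div_cosh_le_two_mul_exp (by positivity) hy.1 hy.2
    _ ≤ ε := by linarith [hH h (le_of_max_le_left hh)]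

theorem BVP_limit_h_to_infinity
    (κ κL L cstar : ℝ) (hκ : 0 < κ) (hκL : 0 < κL) (hL : 0 < L) (hc : 0 < cstar)
    (r : ℝ → ℝ) (hr : ContDiff ℝ 1 r) (hrsign : ∀ s : ℝ, s ≠ 0 → s * r s > 0)
    (hr' : ∀ s : ℝ, 0 ≤ deriv r s)
    (hr'pos : ∀ s ∈ Icc (0:ℝ) cstar, 0 < deriv r s) :
    ∀ δ : ℝ, δ ∈ Ioo (0:ℝ) 1 → ∀ ε > (0:ℝ), ∃ H > (0:ℝ), ∀ h : ℝ, H ≤ h →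
      ∀ u u' u'' : ℝ → ℝ, SolvesBVP κ κL L cstar r h u u' u'' →
        ∀ y ∈ Icc (0:ℝ) (1 - δ), 0 ≤ u y ∧ u y ≤ ε :=
  BVP_limit_h_to_infinity_general κ κL L cstar hκ hκL hL hc r hr hrsign hr'pos
end
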